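/- Let z₁,…,zₙ be nonzero vectors in ℝ^p with max_i 1/‖zᵢ‖² ≤ T, set z̃ᵢ = (zᵢ,1) ∈ ℝ^{p+1}, and let Ž, Ž̃ be the matrices of unit-normalized rows zᵢ/‖zᵢ‖, z̃ᵢ/‖z̃ᵢ‖. If ‖ŽŽᵀ − Iₙ‖ ≤ ε in operator norm (with ε ≥ 0), then ‖Ž̃Ž̃ᵀ − Iₙ‖ ≤ √(n(n−1))·(2ε+1)·T + ε. -/

import Mathlib

/-!
Write `G' - 1 = (G' - G) + (G - 1)`. The perturbation `G' - G` vanishes on the diagonal. Off the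
diagonal, with `g = G i j`, `a = ‖z i‖`, `b = ‖z j‖` and `r = ab / (√(a²+1) √(b²+1))`, its entry is
`g (r - 1) + 1 / (√(a²+1) √(b²+1))`; here `|g| ≤ ε` since `g` is an entry of `G - 1`,
`1 - r ≤ 1 - r² ≤ 1/a² + 1/b² ≤ 2T`, and the last term is at most `T` by AM-GM. Bounding the
operator norm by the Frobenius norm turns this entrywise bound into `√(n(n-1)) (2ε+1) T`.
-/

open scoped Matrix.Norms.L2Operator

noncomputable def append1 {p : ℕ} (u : EuclideanSpace ℝ (Fin p)) (t : ℝ) :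
    WithLp 2 (EuclideanSpace ℝ (Fin p) × ℝ) :=
  (WithLp.equiv 2 (EuclideanSpace ℝ (Fin p) × ℝ)).symm (u, t)

namespace Matrix

variable {𝕜 m n : Type*} [RCLike 𝕜] [Fintype m] [Fintype n]

theorem norm_apply_le_l2_opNorm [DecidableEq n] (A : Matrix m n 𝕜) (i : m) (j : n) :
    ‖A i j‖ ≤ ‖A‖ := by
  have h := A.l2_opNorm_mulVec (EuclideanSpace.single j 1)
  rw [PiLp.norm_single, norm_one, mul_one] at h
  refine le_trans (le_of_eq ?_) ((PiLp.norm_apply_le _ i).trans h)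
  simp [mulVec_single]

theorem l2_opNorm_le_sqrt_sum_norm_sq [DecidableEq n] (A : Matrix m n 𝕜) :
    ‖A‖ ≤ √(∑ i, ∑ j, ‖A i j‖ ^ 2) := by
  rw [l2_opNorm_def]
  refine ContinuousLinearMap.opNorm_le_bound _ (Real.sqrt_nonneg _) fun x => ?_
  rw [EuclideanSpace.norm_eq, EuclideanSpace.norm_eq, ← Real.sqrt_mul (by positivity)]
  refine Real.sqrt_le_sqrt ?_
  rw [Finset.sum_mul]
  refine Finset.sum_le_sum fun i _ => ?_
  calc ‖(A *ᵥ x.ofLp) i‖ ^ 2 ≤ (∑ j, ‖A i j‖ * ‖x j‖) ^ 2 := by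
        gcongr
        exact (norm_sum_le _ _).trans_eq (by simp [norm_mul])
    _ ≤ (∑ j, ‖A i j‖ ^ 2) * ∑ j, ‖x j‖ ^ 2 := Finset.sum_mul_sq_le_sq_mul_sq _ _ _

theorem l2_opNorm_le_of_diag_eq_zero [DecidableEq n] {A : Matrix n n 𝕜} {c : ℝ}
    (hdiag : ∀ i, A i i = 0) (hoff : ∀ i j, i ≠ j → ‖A i j‖ ≤ c) :
    ‖A‖ ≤ √(Fintype.card n * (Fintype.card n - 1)) * c := by
  rcases subsingleton_or_nontrivial n with hn | hn
  · have hA : A = 0 := by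
      ext i j
      rw [Subsingleton.elim i j]
      exact hdiag j
    have hcard : (Fintype.card n : ℝ) * (Fintype.card n - 1) = 0 := by
      have := Fintype.card_le_one_iff_subsingleton.2 hn
      interval_cases Fintype.card n <;> norm_num
    simp [hA, hcard]
  obtain ⟨i₀, j₀, hne⟩ := exists_pair_ne n
  have hc : 0 ≤ c := (norm_nonneg _).trans (hoff i₀ j₀ hne)
  have hcard : (1 : ℝ) ≤ Fintype.card n := by exact_mod_cast Fintype.card_pos
  have hrow : ∀ i, ∑ j, ‖A i j‖ ^ 2 ≤ (Fintype.card n - 1) * c ^ 2 := by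
    intro i
    rw [← Finset.sum_erase (f := fun j => ‖A i j‖ ^ 2) (a := i) Finset.univ (by simp [hdiag])]
    calc ∑ j ∈ Finset.univ.erase i, ‖A i j‖ ^ 2 ≤ ∑ j ∈ Finset.univ.erase i, c ^ 2 :=
          Finset.sum_le_sum fun j hj =>
            pow_le_pow_left₀ (norm_nonneg _) (hoff i j (Finset.ne_of_mem_erase hj).symm) 2
      _ = (Fintype.card n - 1) * c ^ 2 := by
          simp [Finset.card_erase_of_mem, Nat.cast_sub Fintype.card_pos]
  calc ‖A‖ ≤ √(∑ i, ∑ j, ‖A i j‖ ^ 2) := l2_opNorm_le_sqrt_sum_norm_sq A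
    _ ≤ √(Fintype.card n * ((Fintype.card n - 1) * c ^ 2)) := by
        gcongr
        exact (Finset.sum_le_sum fun i _ => hrow i).trans_eq (by simp)
    _ = √(Fintype.card n * (Fintype.card n - 1)) * c := by
        rw [← mul_assoc, Real.sqrt_mul (by nlinarith), Real.sqrt_sq hc]

end Matrix

theorem abs_div_sqrt_mul_sqrt_sub_le {a b g ε T : ℝ} (ha : 0 < a) (hb : 0 < b) (hg : |g| ≤ ε)
    (hTa : 1 / a ^ 2 ≤ T) (hTb : 1 / b ^ 2 ≤ T) :
    |(g * (a * b) + 1) / (√(a ^ 2 + 1) * √(b ^ 2 + 1)) - g| ≤ (2 * ε + 1) * T := by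
  set A := √(a ^ 2 + 1)
  set B := √(b ^ 2 + 1)
  have hA : A ^ 2 = a ^ 2 + 1 := Real.sq_sqrt (by positivity)
  have hB : B ^ 2 = b ^ 2 + 1 := Real.sq_sqrt (by positivity)
  have hA0 : 0 < A := by positivity
  have hB0 : 0 < B := by positivity
  have haA : a < A := by nlinarith
  have hbB : b < B := by nlinarith
  set r := a * b / (A * B)
  have hr0 : 0 ≤ r := by positivity
  have hr1 : r ≤ 1 := (div_le_one (by positivity)).2 (by gcongr)
  have hTA : 1 / A ^ 2 ≤ T := le_trans (by gcongr) hTa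
  have hTB : 1 / B ^ 2 ≤ T := le_trans (by gcongr) hTb
  have hr : 1 - r ≤ 2 * T := by
    have h3 : 1 - r ^ 2 ≤ 1 / A ^ 2 + 1 / B ^ 2 := by
      simp only [r]; field_simp; rw [hA, hB]; nlinarith
    nlinarith
  have hAB : 1 / (A * B) ≤ T := by
    rw [← one_div_pow] at hTA hTB
    rw [← one_div_mul_one_div]
    nlinarith [sq_nonneg (1 / A - 1 / B)]
  calc |(g * (a * b) + 1) / (A * B) - g| = |g * (r - 1) + 1 / (A * B)| := by
        congr 1; simp only [r]; field_simp; ring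
    _ ≤ |g| * (1 - r) + 1 / (A * B) := by
        refine (abs_add_le _ _).trans ?_
        rw [abs_mul, abs_of_nonpos (by linarith : r - 1 ≤ 0),
          abs_of_pos (one_div_pos.2 (mul_pos hA0 hB0))]
        linarith
    _ ≤ ε * (2 * T) + T := by
        have hε : 0 ≤ ε := (abs_nonneg g).trans hg
        gcongr
    _ = (2 * ε + 1) * T := by ring

section append1

variable {p : ℕ} (u v : EuclideanSpace ℝ (Fin p)) (s t : ℝ)

theorem norm_append1 : ‖append1 u t‖ = √(‖u‖ ^ 2 + t ^ 2) := by
  rw [← Real.sqrt_sq (norm_nonneg (append1 u t)), WithLp.prod_norm_sq_eq_of_L2]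
  simp [append1]

theorem inner_append1 : inner ℝ (append1 u s) (append1 v t) = inner ℝ u v + s * t := by
  simp [append1, WithLp.prod_inner_apply, mul_comm]

end append1

/-- `G` is the normalized Gram matrix ŽŽᵀ and `G'` is Ž̃Ž̃ᵀ for the extended vectors. -/
theorem stmt_5_general (n p : ℕ) (z : Fin n → EuclideanSpace ℝ (Fin p)) (hz : ∀ i, z i ≠ 0)
    (T ε : ℝ)
    (hT : ∀ i, 1 / ‖z i‖ ^ 2 ≤ T)
    (G G' : Matrix (Fin n) (Fin n) ℝ)
    (hG : ∀ i j, G i j = (inner ℝ (z i) (z j) : ℝ) / (‖z i‖ * ‖z j‖))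
    (hG' : ∀ i j, G' i j =
      (inner ℝ (append1 (z i) 1) (append1 (z j) 1) : ℝ) / (‖append1 (z i) 1‖ * ‖append1 (z j) 1‖))
    (hE1 : ‖G - 1‖ ≤ ε) :
    ‖G' - 1‖ ≤ Real.sqrt (n * (n - 1)) * (2 * ε + 1) * T + ε := by
  have hzn : ∀ i, 0 < ‖z i‖ := fun i => norm_pos_iff.2 (hz i)
  have hG'G : ∀ i j, G' i j =
      (G i j * (‖z i‖ * ‖z j‖) + 1) / (√(‖z i‖ ^ 2 + 1) * √(‖z j‖ ^ 2 + 1)) := by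
    intro i j
    rw [hG', hG, inner_append1, norm_append1, norm_append1,
      div_mul_cancel₀ _ (mul_pos (hzn i) (hzn j)).ne']
    norm_num
  have hGd : ∀ i, G i i = 1 := fun i => by
    rw [hG, real_inner_self_eq_norm_mul_norm, div_self (mul_pos (hzn i) (hzn i)).ne']
  have hdiag : ∀ i, (G' - G) i i = 0 := fun i => by
    rw [Matrix.sub_apply, hG'G, hGd, one_mul, Real.mul_self_sqrt (by positivity), ← sq,
      div_self (by positivity), sub_self]
  have hoff : ∀ i j, i ≠ j → ‖(G' - G) i j‖ ≤ (2 * ε + 1) * T := by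
    intro i j hij
    have hGij : |G i j| ≤ ε := by
      simpa [hij] using (Matrix.norm_apply_le_l2_opNorm (G - 1) i j).trans hE1
    rw [Matrix.sub_apply, hG'G, Real.norm_eq_abs]
    exact abs_div_sqrt_mul_sqrt_sub_le (hzn i) (hzn j) hGij (hT i) (hT j)
  calc ‖G' - 1‖ ≤ ‖G' - G‖ + ‖G - 1‖ := norm_sub_le_norm_sub_add_norm_sub _ _ _
    _ ≤ √(n * (n - 1)) * ((2 * ε + 1) * T) + ε := by
        gcongr
        simpa using Matrix.l2_opNorm_le_of_diag_eq_zero hdiag hoff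
    _ = √(n * (n - 1)) * (2 * ε + 1) * T + ε := by ring

/-- `G` is the normalized Gram matrix ŽŽᵀ and `G'` is Ž̃Ž̃ᵀ for the extended vectors.
`‖·‖` is the l2 operator (spectral) norm on matrices. -/
theorem stmt_5 (n p : ℕ) (z : Fin n → EuclideanSpace ℝ (Fin p)) (hz : ∀ i, z i ≠ 0)
    (T ε : ℝ) (hε : 0 ≤ ε)
    (hT : ∀ i, 1 / ‖z i‖ ^ 2 ≤ T)
    (G G' : Matrix (Fin n) (Fin n) ℝ)
    (hG : ∀ i j, G i j = (inner ℝ (z i) (z j) : ℝ) / (‖z i‖ * ‖z j‖))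
    (hG' : ∀ i j, G' i j =
      (inner ℝ (append1 (z i) 1) (append1 (z j) 1) : ℝ) / (‖append1 (z i) 1‖ * ‖append1 (z j) 1‖))
    (hE1 : ‖G - 1‖ ≤ ε) :
    ‖G' - 1‖ ≤ Real.sqrt (n * (n - 1)) * (2 * ε + 1) * T + ε :=
  stmt_5_general n p z hz T ε hT G G' hG hG' hE1
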